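/- arXiv:2004.09313 — 6 statements merged into one kernel-verified Lean document; each statement's English description precedes it below -/
import Mathlib

section
/- Let S = ∑_{k=0}^∞ ln(1 + 2⁻ᵏ). If 0 ≤ x < S, then for every n ≥ 0 the residual of the exponential recurrence satisfies 0 ≤ Lₙ < ∑_{k=n}^∞ ln(1 + 2⁻ᵏ). -/
/-!
The recurrence is the greedy algorithm for writing `x` as a sum of distinct weights
`wₖ = ln (1 + 2⁻ᵏ)`, and the invariant `0 ≤ Lₙ < ∑_{k ≥ n} wₖ` survives a step with `dₙ = 0`
because each weight is dominated by the sum of all later ones: `wₙ ≤ ∑_{k > n} wₖ`.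
That holds since `∏_{k > n} (1 + 2⁻ᵏ) ≥ 1 + ∑_{k > n} 2⁻ᵏ = 1 + 2⁻ⁿ`.
-/

/-- Restoring shift-and-add recurrence for computing `exp x`:
`(expRec x n).1 = Lₙ` (residual) and `(expRec x n).2 = Eₙ` (partial product),
with `L₀ = x`, `E₀ = 1`, `dₙ = 1` iff `Lₙ ≥ ln (1 + 2⁻ⁿ)`,
`Lₙ₊₁ = Lₙ - ln (1 + dₙ 2⁻ⁿ)`, `Eₙ₊₁ = Eₙ (1 + dₙ 2⁻ⁿ)`. -/
noncomputable def expRec (x : ℝ) : ℕ → ℝ × ℝ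
  | 0 => (x, 1)
  | n + 1 =>
    let p := expRec x n
    if Real.log (1 + (2 : ℝ) ^ (-(n : ℤ))) ≤ p.1 then
      (p.1 - Real.log (1 + (2 : ℝ) ^ (-(n : ℤ))), p.2 * (1 + (2 : ℝ) ^ (-(n : ℤ))))
    else p

open Real

theorem Finset.one_add_sum_le_prod_one_add {ι R : Type*} [CommSemiring R] [PartialOrder R]
    [IsOrderedRing R] (s : Finset ι) {a : ι → R} (ha : ∀ i, 0 ≤ a i) :
    1 + ∑ i ∈ s, a i ≤ ∏ i ∈ s, (1 + a i) := by
  classical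
  induction s using Finset.induction_on with
  | empty => simp
  | insert i s hi ih =>
    rw [Finset.sum_insert hi, Finset.prod_insert hi]
    calc 1 + (a i + ∑ j ∈ s, a j) ≤ 1 + (a i + ∑ j ∈ s, a j) + a i * ∑ j ∈ s, a j :=
          le_add_of_nonneg_right (mul_nonneg (ha i) (s.sum_nonneg fun j _ => ha j))
      _ = (1 + a i) * (1 + ∑ j ∈ s, a j) := by ring
      _ ≤ (1 + a i) * ∏ j ∈ s, (1 + a j) :=
          mul_le_mul_of_nonneg_left ih (add_nonneg zero_le_one (ha i))

theorem Real.one_add_tsum_le_tprod_one_add {ι : Type*} {a : ι → ℝ} (ha : ∀ i, 0 ≤ a i)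
    (hs : Summable a) : 1 + ∑' i, a i ≤ ∏' i, (1 + a i) :=
  le_of_tendsto_of_tendsto' (hs.hasSum.const_add 1)
    (Real.multipliable_one_add_of_summable hs).hasProd
    fun s => s.one_add_sum_le_prod_one_add ha

theorem Real.log_one_add_tsum_le_tsum_log_one_add {ι : Type*} {a : ι → ℝ} (ha : ∀ i, 0 ≤ a i)
    (hs : Summable a) : log (1 + ∑' i, a i) ≤ ∑' i, log (1 + a i) := by
  have hpos : ∀ i, 0 < 1 + a i := fun i => by linarith [ha i]
  have hsum : 0 ≤ ∑' i, a i := tsum_nonneg ha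
  rw [log_le_iff_le_exp (by linarith),
    rexp_tsum_eq_tprod hpos (summable_log_one_add_of_summable hs)]
  exact one_add_tsum_le_tprod_one_add ha hs

theorem two_zpow_neg_natCast_add (m k : ℕ) :
    (2 : ℝ) ^ (-((m + k : ℕ) : ℤ)) = 2 ^ (-(m : ℤ)) * (1 / 2) ^ k := by
  rw [Nat.cast_add, neg_add, zpow_add₀ two_ne_zero]
  simp [zpow_neg]

theorem summable_two_zpow_neg_natCast_add (m : ℕ) :
    Summable fun k : ℕ => (2 : ℝ) ^ (-((m + k : ℕ) : ℤ)) := by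
  simp_rw [two_zpow_neg_natCast_add]
  exact summable_geometric_two.mul_left _

theorem tsum_two_zpow_neg_natCast_succ_add (n : ℕ) :
    ∑' k : ℕ, (2 : ℝ) ^ (-((n + 1 + k : ℕ) : ℤ)) = 2 ^ (-(n : ℤ)) := by
  simp_rw [two_zpow_neg_natCast_add, tsum_mul_left, tsum_geometric_two]
  rw [pow_one, one_div, inv_mul_cancel_right₀ two_ne_zero]

theorem log_one_add_two_zpow_le_tsum_succ_add (n : ℕ) :
    log (1 + (2 : ℝ) ^ (-(n : ℤ))) ≤
      ∑' k : ℕ, log (1 + (2 : ℝ) ^ (-((n + 1 + k : ℕ) : ℤ))) := by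
  rw [← tsum_two_zpow_neg_natCast_succ_add n]
  exact log_one_add_tsum_le_tsum_log_one_add (fun k => by positivity)
    (summable_two_zpow_neg_natCast_add (n + 1))

theorem tsum_log_one_add_two_zpow_eq_add (n : ℕ) :
    ∑' k : ℕ, log (1 + (2 : ℝ) ^ (-((n + k : ℕ) : ℤ))) =
      log (1 + (2 : ℝ) ^ (-(n : ℤ))) + ∑' k : ℕ, log (1 + (2 : ℝ) ^ (-((n + 1 + k : ℕ) : ℤ))) := by
  rw [(summable_log_one_add_of_summable (summable_two_zpow_neg_natCast_add n)).tsum_eq_zero_add]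
  simp only [add_zero, add_assoc, add_comm 1]

/-- If `0 ≤ x < S = ∑_{k=0}^∞ ln (1 + 2⁻ᵏ)`, then for every `n`,
`0 ≤ Lₙ < ∑_{k=n}^∞ ln (1 + 2⁻ᵏ)`. -/
theorem expRec_residual_bounds (x : ℝ)
    (hx0 : 0 ≤ x) (hxS : x < ∑' k : ℕ, Real.log (1 + (2 : ℝ) ^ (-(k : ℤ)))) (n : ℕ) :
    0 ≤ (expRec x n).1 ∧
      (expRec x n).1 < ∑' k : ℕ, Real.log (1 + (2 : ℝ) ^ (-((n + k : ℕ) : ℤ))) := by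
  induction n with
  | zero => simpa only [expRec, Nat.zero_add] using And.intro hx0 hxS
  | succ n ih =>
    obtain ⟨hL0, hLlt⟩ := ih
    rw [tsum_log_one_add_two_zpow_eq_add n] at hLlt
    simp only [expRec]
    split_ifs with hstep
    · exact ⟨sub_nonneg.mpr hstep, by linarith⟩
    · exact ⟨hL0, (not_le.mp hstep).trans_le (log_one_add_two_zpow_le_tsum_succ_add n)⟩
end

section
/- Let S = ∑_{k=0}^∞ ln(1 + 2⁻ᵏ) and suppose 0 ≤ x < S. Then for every I ≥ 0 the exponential recurrence satisfies 0 ≤ (eˣ − E_I)/eˣ ≤ L_I < 2^{1−I}; in particular Eₙ converges to eˣ as n → ∞. -/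
noncomputable def eTerm (k : ℕ) : ℝ := Real.log (1 + (2:ℝ) ^ (-(k:ℤ)))

lemma two_zpow_pos (k : ℕ) : (0:ℝ) < (2:ℝ) ^ (-(k:ℤ)) := zpow_pos (by norm_num) _

lemma two_zpow_eq (k : ℕ) : (2:ℝ) ^ (-(k:ℤ)) = (1/2:ℝ)^k := by
  rw [one_div, inv_pow, ← zpow_natCast 2 k, ← zpow_neg]

lemma eTerm_pos (k : ℕ) : 0 < eTerm k :=
  Real.log_pos (by linarith [two_zpow_pos k])

lemma eTerm_le (k : ℕ) : eTerm k ≤ (1/2:ℝ)^k := by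
  have := Real.log_le_sub_one_of_pos (x := 1 + (2:ℝ) ^ (-(k:ℤ))) (by linarith [two_zpow_pos k])
  rw [← two_zpow_eq]
  simpa [eTerm] using this

lemma summable_eTerm : Summable eTerm :=
  Summable.of_nonneg_of_le (fun k => (eTerm_pos k).le) eTerm_le
    (summable_geometric_of_lt_one (by norm_num) (by norm_num))

lemma eTerm_double (k : ℕ) : eTerm k ≤ 2 * eTerm (k+1) := by
  have h2 : (2:ℝ) * eTerm (k+1) = Real.log ((1 + (2:ℝ) ^ (-(k+1:ℕ):ℤ))^2) := by
    rw [Real.log_pow]; push_cast [eTerm]; ring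
  rw [eTerm, h2]
  apply Real.log_le_log (by linarith [two_zpow_pos k])
  rw [two_zpow_eq, two_zpow_eq]
  have h := pow_nonneg (by norm_num : (0:ℝ) ≤ 1/2) k
  have ht : (1/2:ℝ)^(k+1) = (1/2)^k * (1/2) := pow_succ _ _
  rw [ht]
  nlinarith [sq_nonneg ((1/2:ℝ)^k)]

noncomputable def eTail (n : ℕ) : ℝ := ∑' i, eTerm (i + n)

lemma summable_shift (n : ℕ) : Summable (fun i => eTerm (i + n)) :=
  (summable_nat_add_iff n).2 summable_eTerm

lemma eTail_eq (n : ℕ) : eTail n = eTerm n + eTail (n+1) := by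
  have h := Summable.tsum_eq_zero_add (summable_shift n)
  simp only [zero_add] at h
  rw [eTail, h]
  congr 1
  · rw [eTail]
    congr 1
    funext i
    congr 1
    omega

lemma eTerm_le_eTail (n : ℕ) : eTerm n ≤ eTail (n+1) := by
  have hgeom : ∀ i : ℕ, eTerm n * (1/2:ℝ)^(i+1) ≤ eTerm (i + (n+1)) := by
    intro i
    induction i with
    | zero => simpa using (by linarith [eTerm_double n] : eTerm n * (1/2:ℝ) ≤ eTerm (n+1))
    | succ j ih =>
      have hd := eTerm_double (j + (n+1))
      have : eTerm n * (1/2:ℝ)^(j+1+1) = (eTerm n * (1/2)^(j+1)) * (1/2) := by ring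
      rw [this]
      have : (eTerm n * (1/2:ℝ)^(j+1)) * (1/2) ≤ eTerm (j + (n+1)) * (1/2) := by
        apply mul_le_mul_of_nonneg_right ih (by norm_num)
      calc (eTerm n * (1/2:ℝ)^(j+1)) * (1/2) ≤ eTerm (j + (n+1)) * (1/2) := this
        _ ≤ eTerm (j + 1 + (n+1)) := by
            have : j + 1 + (n+1) = (j + (n+1)) + 1 := by omega
            rw [this]; linarith [eTerm_double (j + (n+1))]
  have hs1 : Summable (fun i : ℕ => eTerm n * (1/2:ℝ)^(i+1)) := by
    apply Summable.mul_left
    exact ((summable_geometric_of_lt_one (by norm_num) (by norm_num)).comp_injective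
      (add_left_injective 1))
  have hle := Summable.tsum_le_tsum hgeom hs1 (summable_shift (n+1))
  have hsum : ∑' i : ℕ, eTerm n * (1/2:ℝ)^(i+1) = eTerm n := by
    rw [tsum_mul_left]
    have : ∑' i : ℕ, (1/2:ℝ)^(i+1) = 1 := by
      have : ∀ i : ℕ, (1/2:ℝ)^(i+1) = (1/2)^i * (1/2) := fun i => pow_succ _ _
      rw [tsum_congr this, tsum_mul_right, tsum_geometric_of_lt_one (by norm_num) (by norm_num)]
      norm_num
    rw [this, mul_one]
  rw [hsum] at hle
  exact hle

lemma eTail_le (n : ℕ) : eTail n ≤ (2:ℝ) ^ ((1:ℤ) - n) := by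
  have h1 : eTail n ≤ ∑' i : ℕ, (1/2:ℝ)^(i+n) := by
    apply Summable.tsum_le_tsum (fun i => eTerm_le (i+n)) (summable_shift n)
    exact ((summable_geometric_of_lt_one (by norm_num) (by norm_num)).comp_injective
      (add_left_injective n))
  have h2 : ∑' i : ℕ, (1/2:ℝ)^(i+n) = 2 * (1/2:ℝ)^n := by
    have : ∀ i : ℕ, (1/2:ℝ)^(i+n) = (1/2)^i * (1/2)^n := fun i => pow_add _ _ _
    rw [tsum_congr this, tsum_mul_right, tsum_geometric_of_lt_one (by norm_num) (by norm_num)]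
    norm_num
  have h3 : (2:ℝ) ^ ((1:ℤ) - n) = 2 * (1/2:ℝ)^n := by
    rw [zpow_sub₀ (by norm_num : (2:ℝ) ≠ 0), ← two_zpow_eq, zpow_neg, zpow_one]
    field_simp
  rw [h3]
  linarith


lemma expRec_inv (x : ℝ) (hx0 : 0 ≤ x) (hxS : x < eTail 0) :
    ∀ n, 0 ≤ (expRec x n).1 ∧ (expRec x n).1 < eTail n ∧
      (expRec x n).2 = Real.exp (x - (expRec x n).1) := by
  intro n
  induction n with
  | zero => exact ⟨hx0, hxS, by simp [expRec]⟩
  | succ n ih =>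
    obtain ⟨h0, hlt, hE⟩ := ih
    have hsplit := eTail_eq n
    have hterm := eTerm_le_eTail n
    show 0 ≤ (expRec x (n+1)).1 ∧ _
    simp only [expRec]
    split_ifs with h
    · refine ⟨by simpa [eTerm] using sub_nonneg.2 h, ?_, ?_⟩
      · have : (expRec x n).1 - eTerm n < eTail (n+1) := by linarith
        simpa [eTerm] using this
      · have hpos : (0:ℝ) < 1 + (2:ℝ)^(-(n:ℤ)) := by linarith [two_zpow_pos n]
        have harg : x - ((expRec x n).1 - Real.log (1 + (2:ℝ)^(-(n:ℤ)))) =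
            (x - (expRec x n).1) + Real.log (1 + (2:ℝ)^(-(n:ℤ))) := by ring
        rw [hE, harg, Real.exp_add, Real.exp_log hpos]
    · refine ⟨h0, ?_, hE⟩
      have hlt2 : (expRec x n).1 < eTerm n := not_le.1 (by simpa [eTerm] using h)
      linarith

/-- If `0 ≤ x < S = ∑_{k=0}^∞ ln (1 + 2⁻ᵏ)`, then for every `I`,
`0 ≤ (exp x − E_I)/exp x ≤ L_I < 2^{1−I}`, and `Eₙ → exp x`. -/
theorem expRec_relative_error (x : ℝ)
    (hx0 : 0 ≤ x) (hxS : x < ∑' k : ℕ, Real.log (1 + (2 : ℝ) ^ (-(k : ℤ)))) :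
    (∀ I : ℕ,
      0 ≤ (Real.exp x - (expRec x I).2) / Real.exp x ∧
      (Real.exp x - (expRec x I).2) / Real.exp x ≤ (expRec x I).1 ∧
      (expRec x I).1 < (2 : ℝ) ^ ((1 : ℤ) - I)) ∧
    Filter.Tendsto (fun n => (expRec x n).2) Filter.atTop (nhds (Real.exp x)) := by
  have hxS' : x < eTail 0 := by
    simpa [eTail, eTerm] using hxS
  have inv := expRec_inv x hx0 hxS'
  have key : ∀ I : ℕ,
      0 ≤ (Real.exp x - (expRec x I).2) / Real.exp x ∧
      (Real.exp x - (expRec x I).2) / Real.exp x ≤ (expRec x I).1 ∧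
      (expRec x I).1 < (2 : ℝ) ^ ((1 : ℤ) - I) := by
    intro I
    obtain ⟨h0, hlt, hE⟩ := inv I
    have hexp : (0:ℝ) < Real.exp x := Real.exp_pos x
    have hratio : (Real.exp x - (expRec x I).2) / Real.exp x = 1 - Real.exp (-(expRec x I).1) := by
      rw [hE, Real.exp_sub, Real.exp_neg]
      field_simp
    constructor
    · rw [hratio]
      have : Real.exp (-(expRec x I).1) ≤ 1 := Real.exp_le_one_iff.2 (by linarith)
      linarith
    constructor
    · rw [hratio]
      have := Real.add_one_le_exp (-(expRec x I).1)
      linarith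
    · exact hlt.trans_le (eTail_le I)
  refine ⟨key, ?_⟩
  have hL0 : Filter.Tendsto (fun n => (expRec x n).1) Filter.atTop (nhds 0) := by
    have hb : Filter.Tendsto (fun n : ℕ => (2:ℝ) ^ ((1:ℤ) - n)) Filter.atTop (nhds 0) := by
      have : (fun n : ℕ => (2:ℝ) ^ ((1:ℤ) - n)) = fun n : ℕ => 2 * (1/2:ℝ)^n := by
        funext n
        rw [zpow_sub₀ (by norm_num : (2:ℝ) ≠ 0), ← two_zpow_eq, zpow_neg, zpow_one]
        field_simp
      rw [this]
      have := (tendsto_pow_atTop_nhds_zero_of_lt_one (by norm_num : (0:ℝ) ≤ 1/2)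
        (by norm_num : (1/2:ℝ) < 1)).const_mul (2:ℝ)
      simpa using this
    exact squeeze_zero (fun n => (inv n).1) (fun n => ((inv n).2.1.trans_le (eTail_le n)).le) hb
  have hxL : Filter.Tendsto (fun n => x - (expRec x n).1) Filter.atTop (nhds x) := by
    simpa using tendsto_const_nhds.sub hL0
  have := (Real.continuous_exp.tendsto x).comp hxL
  refine this.congr fun n => ?_
  exact ((inv n).2.2).symm
end

section
/- If 0 ≤ x < ln 2, then for every n ≥ 0 the exponential recurrence satisfies 1 ≤ Eₙ < 2 (so each Eₙ is a valid binary floating-point significand). -/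
/-!
Each step moves a factor `1 + 2⁻ⁿ` from `exp Lₙ` into `Eₙ`, so `Eₙ · exp Lₙ = exp x` for all `n`.
A step is only taken when the residual stays nonnegative, hence `Lₙ ≥ 0` and
`1 ≤ Eₙ ≤ exp x < 2`.
-/

open Real

theorem expRec_succ (x : ℝ) (n : ℕ) : expRec x (n + 1) =
    if log (1 + (2 : ℝ) ^ (-(n : ℤ))) ≤ (expRec x n).1 then
      ((expRec x n).1 - log (1 + (2 : ℝ) ^ (-(n : ℤ))),
        (expRec x n).2 * (1 + (2 : ℝ) ^ (-(n : ℤ))))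
    else expRec x n :=
  rfl

theorem expRec_snd_mul_exp_fst (x : ℝ) (n : ℕ) :
    (expRec x n).2 * exp (expRec x n).1 = exp x := by
  induction n with
  | zero => simp [expRec]
  | succ n ih =>
    rw [expRec_succ]
    split_ifs
    · rw [exp_sub, exp_log (by positivity), ← ih]
      field_simp
    · exact ih

theorem one_le_expRec_snd (x : ℝ) (n : ℕ) : 1 ≤ (expRec x n).2 := by
  induction n with
  | zero => exact le_rfl
  | succ n ih =>
    rw [expRec_succ]
    split_ifs
    · exact one_le_mul_of_one_le_of_one_le ih (le_add_of_nonneg_right (by positivity))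
    · exact ih

theorem expRec_fst_nonneg {x : ℝ} (hx : 0 ≤ x) (n : ℕ) : 0 ≤ (expRec x n).1 := by
  induction n with
  | zero => exact hx
  | succ n ih =>
    rw [expRec_succ]
    split_ifs with h
    exacts [sub_nonneg.2 h, ih]

theorem expRec_snd_le_exp {x : ℝ} (hx : 0 ≤ x) (n : ℕ) : (expRec x n).2 ≤ exp x :=
  calc (expRec x n).2
      ≤ (expRec x n).2 * exp (expRec x n).1 :=
        le_mul_of_one_le_right (zero_le_one.trans (one_le_expRec_snd x n))
          (one_le_exp (expRec_fst_nonneg hx n))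
    _ = exp x := expRec_snd_mul_exp_fst x n

/-- If `0 ≤ x < ln 2`, then for every `n`, `1 ≤ Eₙ < 2`. -/
theorem expRec_significand_bounds (x : ℝ) (hx0 : 0 ≤ x) (hx2 : x < Real.log 2) (n : ℕ) :
    1 ≤ (expRec x n).2 ∧ (expRec x n).2 < 2 :=
  ⟨one_le_expRec_snd x n,
    (expRec_snd_le_exp hx0 n).trans_lt ((lt_log_iff_exp_lt two_pos).1 hx2)⟩
end

section
/- Let S = ∑_{k=0}^∞ ln(1 + 2⁻ᵏ) and suppose 0 ≤ x < S. Then for every I ≥ 0 the explicit Euler integration step of the exponential recurrence satisfies 0 ≤ eˣ − E_I·(1 + L_I) ≤ eˣ · L_I² / 2. -/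
lemma expRec_L_nonneg (x : ℝ) (hx0 : 0 ≤ x) : ∀ n, 0 ≤ (expRec x n).1 := by
  intro n
  induction n with
  | zero => exact hx0
  | succ n ih =>
    simp only [expRec]
    split_ifs with h
    · simp only [sub_nonneg]; exact h
    · exact ih

lemma expRec_invariant (x : ℝ) : ∀ n, (expRec x n).2 * Real.exp (expRec x n).1 = Real.exp x := by
  intro n
  induction n with
  | zero => simp [expRec]
  | succ n ih =>
    simp only [expRec]
    split_ifs with h
    · have hpos : (0:ℝ) < 1 + (2 : ℝ) ^ (-(n : ℤ)) := by positivity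
      simp only [Real.exp_sub, Real.exp_log hpos]
      field_simp
      rw [← ih]
    · exact ih

lemma exp_sub_one_le (t : ℝ) : Real.exp t - 1 ≤ t * Real.exp t := by
  have h := Real.add_one_le_exp (-t)
  have := Real.exp_pos t
  have hm : Real.exp (-t) * Real.exp t = 1 := by
    rw [← Real.exp_add]; simp
  nlinarith

lemma key_ineq (L : ℝ) (hL : 0 ≤ L) : Real.exp L - (1 + L) ≤ Real.exp L * L ^ 2 / 2 := by
  have hmono : ∫ t in (0:ℝ)..L, (Real.exp t - 1) ≤ ∫ t in (0:ℝ)..L, Real.exp L * t := by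
    apply intervalIntegral.integral_mono_on hL
    · exact (Real.continuous_exp.sub continuous_const).intervalIntegrable 0 L
    · exact (continuous_const.mul continuous_id).intervalIntegrable 0 L
    · intro t ht
      obtain ⟨ht0, htL⟩ := ht
      calc Real.exp t - 1 ≤ t * Real.exp t := exp_sub_one_le t
        _ ≤ t * Real.exp L := by
            exact mul_le_mul_of_nonneg_left (Real.exp_le_exp.mpr htL) ht0
        _ = Real.exp L * t := mul_comm _ _
  rw [intervalIntegral.integral_sub (Real.continuous_exp.intervalIntegrable 0 L)
      (intervalIntegrable_const), integral_exp, intervalIntegral.integral_const,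
      intervalIntegral.integral_const_mul, integral_id] at hmono
  simp at hmono
  nlinarith

/-- If `0 ≤ x < S = ∑_{k=0}^∞ ln (1 + 2⁻ᵏ)`, then for every `I`, the explicit
Euler step satisfies `0 ≤ exp x − E_I·(1 + L_I) ≤ exp x · L_I² / 2`. -/
theorem expRec_euler_step_error (x : ℝ)
    (hx0 : 0 ≤ x) (hxS : x < ∑' k : ℕ, Real.log (1 + (2 : ℝ) ^ (-(k : ℤ)))) (I : ℕ) :
    0 ≤ Real.exp x - (expRec x I).2 * (1 + (expRec x I).1) ∧
      Real.exp x - (expRec x I).2 * (1 + (expRec x I).1) ≤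
        Real.exp x * (expRec x I).1 ^ 2 / 2 := by
  set L := (expRec x I).1 with hLdef
  set E := (expRec x I).2 with hEdef
  have hL : 0 ≤ L := expRec_L_nonneg x hx0 I
  have hInv : E * Real.exp L = Real.exp x := expRec_invariant x I
  have hE : 0 < E := by
    have := Real.exp_pos L
    have := Real.exp_pos x
    nlinarith
  constructor
  · have : L + 1 ≤ Real.exp L := Real.add_one_le_exp L
    nlinarith
  · have hk := key_ineq L hL
    nlinarith [Real.exp_pos L]
end

section
/- Suppose 0 ≤ x ≤ 1.56 and ε > 0, and let I ≥ 0 be such that the residual of the exponential recurrence satisfies L_I ≤ √(2ε / e^{1.56}). Then the Euler-step output satisfies |eˣ − (E_I + L_I·E_I)| ≤ ε. -/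
/-!
The recurrence preserves `Eₙ = e^{x - Lₙ}`, and the residual stays nonnegative. Hence the
Euler-step error is `e^x (1 - (1 + L) e^{-L})` with `L = L_I ≥ 0`, and
`0 ≤ 1 - (1 + L) e^{-L} ≤ L²/2`, so the error is at most `e^{1.56} L²/2 ≤ ε`.
-/

open Real

theorem expRec_snd_eq_exp_sub (x : ℝ) (n : ℕ) : (expRec x n).2 = exp (x - (expRec x n).1) := by
  induction n with
  | zero => simp [expRec]
  | succ n ih =>
    rw [expRec]
    split_ifs
    · have hpos : (0 : ℝ) < 1 + (2 : ℝ) ^ (-(n : ℤ)) := by positivity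
      rw [ih, sub_sub_eq_add_sub, add_sub_right_comm, exp_add, exp_log hpos]
    · exact ih

theorem one_add_mul_exp_neg_le_one (t : ℝ) : (1 + t) * exp (-t) ≤ 1 := by
  calc (1 + t) * exp (-t) ≤ exp t * exp (-t) := by
        gcongr
        linarith [add_one_le_exp t]
    _ = 1 := by rw [← exp_add, add_neg_cancel, exp_zero]

-- `t ↦ t²/2 + (1 + t) e^{-t}` has derivative `t (1 - e^{-t}) ≥ 0` on `[0, ∞)`.
theorem one_sub_sq_div_two_le_one_add_mul_exp_neg {t : ℝ} (ht : 0 ≤ t) :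
    1 - t ^ 2 / 2 ≤ (1 + t) * exp (-t) := by
  let f : ℝ → ℝ := fun s => s ^ 2 / 2 + (1 + s) * exp (-s)
  have hderiv (s : ℝ) : HasDerivAt f (s * (1 - exp (-s))) s := by
    have hexp : HasDerivAt (fun s => exp (-s)) (-exp (-s)) s := by
      simpa using (hasDerivAt_neg s).exp
    refine (((hasDerivAt_pow 2 s).div_const 2).add
      (((hasDerivAt_id' s).const_add 1).mul hexp)).congr_deriv ?_
    push_cast
    ring
  have hmono : MonotoneOn f (Set.Ici 0) := by
    refine monotoneOn_of_hasDerivWithinAt_nonneg (convex_Ici 0)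
      (fun s _ => (hderiv s).continuousAt.continuousWithinAt)
      (fun s _ => (hderiv s).hasDerivWithinAt) fun s hs => ?_
    rw [interior_Ici, Set.mem_Ioi] at hs
    exact mul_nonneg hs.le (sub_nonneg.2 (exp_le_one_iff.2 (neg_nonpos.2 hs.le)))
  have h := hmono Set.self_mem_Ici (Set.mem_Ici.2 ht) ht
  simp only [f] at h
  norm_num at h
  linarith

theorem abs_exp_sub_euler_step_le (y : ℝ) {t : ℝ} (ht : 0 ≤ t) :
    |exp y - (exp (y - t) + t * exp (y - t))| ≤ exp y * (t ^ 2 / 2) := by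
  have hfactor : exp y - (exp (y - t) + t * exp (y - t)) = exp y * (1 - (1 + t) * exp (-t)) := by
    rw [sub_eq_add_neg y t, exp_add]
    ring
  rw [hfactor, abs_of_nonneg (mul_nonneg (exp_nonneg y)
    (sub_nonneg.2 (one_add_mul_exp_neg_le_one t)))]
  gcongr
  linarith [one_sub_sq_div_two_le_one_add_mul_exp_neg ht]

/-- If `0 ≤ x ≤ 1.56`, `ε > 0`, and the residual satisfies
`L_I ≤ √(2ε / e^{1.56})`, then the Euler-step output `E_I + L_I·E_I`
approximates `exp x` to within `ε`. -/
theorem expRec_euler_step_accuracy (x : ℝ) (hx0 : 0 ≤ x) (hx : x ≤ 1.56)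
    (ε : ℝ) (hε : 0 < ε) (I : ℕ)
    (hL : (expRec x I).1 ≤ Real.sqrt (2 * ε / Real.exp 1.56)) :
    |Real.exp x - ((expRec x I).2 + (expRec x I).1 * (expRec x I).2)| ≤ ε := by
  set L := (expRec x I).1
  have hL0 : 0 ≤ L := expRec_fst_nonneg hx0 I
  have hLsq : L ^ 2 ≤ 2 * ε / exp 1.56 := (le_sqrt hL0 (by positivity)).1 hL
  rw [expRec_snd_eq_exp_sub]
  calc _ ≤ exp x * (L ^ 2 / 2) := abs_exp_sub_euler_step_le x hL0
    _ ≤ exp 1.56 * ((2 * ε / exp 1.56) / 2) := by gcongr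
    _ = ε := by field_simp
end

section
/- Let S = ∑_{k=0}^∞ ln(1 + 2⁻ᵏ) and suppose 0 ≤ x < S. Then for every n ≥ 0 the residual of the exponential recurrence satisfies L_{n+1} < 2·ln(1 + 2⁻ⁿ). -/
open Filter Topology Finset

theorem le_tsum_succ_of_le_two_mul_succ {f : ℕ → ℝ} (hf : Summable f)
    (h : ∀ k, f k ≤ 2 * f (k + 1)) : f 0 ≤ ∑' k, f (k + 1) := by
  have hpartial : ∀ m, f 0 ≤ ∑ k ∈ range m, f (k + 1) + f m := by
    intro m
    induction m with
    | zero => simp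
    | succ m ih => rw [sum_range_succ]; linarith [h m]
  have hlim : Tendsto (fun m => ∑ k ∈ range m, f (k + 1) + f m) atTop
      (𝓝 (∑' k, f (k + 1) + 0)) :=
    ((summable_nat_add_iff 1).2 hf).tendsto_sum_tsum_nat.add hf.tendsto_atTop_zero
  rw [add_zero] at hlim
  exact ge_of_tendsto' hlim hpartial

theorem Real.log_one_add_two_mul_le {t : ℝ} (ht : 0 ≤ t) :
    Real.log (1 + 2 * t) ≤ 2 * Real.log (1 + t) := by
  calc Real.log (1 + 2 * t) ≤ Real.log ((1 + t) ^ 2) :=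
        Real.log_le_log (by positivity) (by nlinarith)
    _ = 2 * Real.log (1 + t) := by rw [Real.log_pow]; norm_num

theorem Real.le_two_mul_log_one_add {t : ℝ} (ht₀ : 0 ≤ t) (ht₂ : t ≤ 2) :
    t ≤ 2 * Real.log (1 + t) := by
  have hlog := Real.le_log_one_add_of_nonneg ht₀
  have hhalf : t / 2 ≤ 2 * t / (t + 2) := by
    rw [div_le_div_iff₀ two_pos (by linarith)]
    nlinarith
  linarith

noncomputable def expRecLog (k : ℕ) : ℝ := Real.log (1 + (2 : ℝ) ^ (-(k : ℤ)))

theorem two_zpow_neg_succ (k : ℕ) :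
    (2 : ℝ) ^ (-((k + 1 : ℕ) : ℤ)) = (2 : ℝ) ^ (-(k : ℤ)) / 2 := by
  rw [Nat.cast_succ, neg_add, zpow_add₀ two_ne_zero, zpow_neg_one, div_eq_mul_inv]

theorem expRecLog_nonneg (k : ℕ) : 0 ≤ expRecLog k :=
  Real.log_nonneg (by simp only [le_add_iff_nonneg_right]; positivity)

theorem expRecLog_le (k : ℕ) : expRecLog k ≤ (2 : ℝ) ^ (-(k : ℤ)) :=
  (Real.log_le_sub_one_of_pos (by positivity)).trans_eq (by ring)

theorem expRecLog_le_two_mul_succ (k : ℕ) : expRecLog k ≤ 2 * expRecLog (k + 1) := by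
  have h := Real.log_one_add_two_mul_le (t := (2 : ℝ) ^ (-(k : ℤ)) / 2) (by positivity)
  rwa [mul_div_cancel₀ _ two_ne_zero, ← two_zpow_neg_succ] at h

theorem summable_expRecLog : Summable expRecLog := by
  refine Summable.of_nonneg_of_le expRecLog_nonneg expRecLog_le ?_
  simpa only [zpow_neg, zpow_natCast, one_div, inv_pow] using summable_geometric_two

theorem tsum_expRecLog_succ_le (n : ℕ) :
    ∑' k, expRecLog (k + (n + 1)) ≤ (2 : ℝ) ^ (-(n : ℤ)) := by
  have hterm (k : ℕ) : (2 : ℝ) ^ (-((k + (n + 1) : ℕ) : ℤ)) = (2 : ℝ) ^ (-(n : ℤ)) / 2 / 2 ^ k := by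
    simp only [zpow_neg, zpow_natCast, pow_add, pow_one]
    ring
  calc ∑' k, expRecLog (k + (n + 1))
      ≤ ∑' k : ℕ, (2 : ℝ) ^ (-(n : ℤ)) / 2 / 2 ^ k :=
        Summable.tsum_le_tsum (fun k => (expRecLog_le _).trans_eq (hterm k))
          ((summable_nat_add_iff _).2 summable_expRecLog)
          (summable_geometric_two' _)
    _ = (2 : ℝ) ^ (-(n : ℤ)) := tsum_geometric_two' _

theorem expRecLog_le_tsum_succ (n : ℕ) : expRecLog n ≤ ∑' k, expRecLog (k + (n + 1)) := by
  have h := le_tsum_succ_of_le_two_mul_succ (f := fun k => expRecLog (k + n))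
    ((summable_nat_add_iff n).2 summable_expRecLog)
    (fun k => by simpa only [add_right_comm] using expRecLog_le_two_mul_succ (k + n))
  simpa only [zero_add, add_right_comm _ 1, add_assoc] using h

theorem expRec_fst_succ (x : ℝ) (n : ℕ) :
    (expRec x (n + 1)).1 =
      if expRecLog n ≤ (expRec x n).1 then (expRec x n).1 - expRecLog n else (expRec x n).1 := by
  rw [expRec, expRecLog]
  split_ifs <;> rfl

theorem expRec_fst_lt_tsum {x : ℝ} (hxS : x < ∑' k, expRecLog k) (n : ℕ) :
    (expRec x n).1 < ∑' k, expRecLog (k + n) := by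
  induction n with
  | zero => simpa [expRec] using hxS
  | succ n ih =>
    have htail : ∑' k, expRecLog (k + n) = expRecLog n + ∑' k, expRecLog (k + (n + 1)) := by
      rw [((summable_nat_add_iff n).2 summable_expRecLog).tsum_eq_zero_add]
      simp only [zero_add, add_right_comm _ 1, add_assoc]
    rw [expRec_fst_succ]
    split_ifs with hd
    · linarith
    · linarith [expRecLog_le_tsum_succ n]

theorem expRec_residual_step_bound_general (x : ℝ)
    (hxS : x < ∑' k : ℕ, Real.log (1 + (2 : ℝ) ^ (-(k : ℤ)))) (n : ℕ) :
    (expRec x (n + 1)).1 < 2 * Real.log (1 + (2 : ℝ) ^ (-(n : ℤ))) := by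
  have hpow : (2 : ℝ) ^ (-(n : ℤ)) ≤ 2 :=
    (zpow_le_one_of_nonpos₀ one_le_two (by simp)).trans one_le_two
  calc (expRec x (n + 1)).1 < ∑' k, expRecLog (k + (n + 1)) := expRec_fst_lt_tsum hxS (n + 1)
    _ ≤ (2 : ℝ) ^ (-(n : ℤ)) := tsum_expRecLog_succ_le n
    _ ≤ 2 * Real.log (1 + (2 : ℝ) ^ (-(n : ℤ))) :=
      Real.le_two_mul_log_one_add (by positivity) hpow

/-- If `0 ≤ x < S = ∑_{k=0}^∞ ln (1 + 2⁻ᵏ)`, then for every `n`,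
`L_{n+1} < 2 ln (1 + 2⁻ⁿ)`. -/
theorem expRec_residual_step_bound (x : ℝ)
    (hx0 : 0 ≤ x) (hxS : x < ∑' k : ℕ, Real.log (1 + (2 : ℝ) ^ (-(k : ℤ)))) (n : ℕ) :
    (expRec x (n + 1)).1 < 2 * Real.log (1 + (2 : ℝ) ^ (-(n : ℤ))) :=
  expRec_residual_step_bound_general x hxS n
end
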